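/- Let P be a program over 𝒰 and A, B ⊆ 𝒰 with A ⊆ B. Then P satisfies Δʳ (for A, B) if and only if there exists an A-simplification of P relative to B. -/
import Mathlib


/-- An extended rule over a type of atoms: head, positive body, negative body,
double-negated body. -/
structure ASPRule (Atom : Type) where
  head : Finset Atom
  pos : Finset Atom
  neg : Finset Atom
  nneg : Finset Atom
deriving DecidableEq

/-- A program is a finite set of rules. -/
abbrev ASPProgram (Atom : Type) [DecidableEq Atom] := Finset (ASPRule Atom)

section Defs

variable {Atom : Type} [DecidableEq Atom] [Fintype Atom]

/-- A rule is over `S` if all its atoms lie in `S`. -/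
def ruleOver (r : ASPRule Atom) (S : Finset Atom) : Prop :=
  r.head ⊆ S ∧ r.pos ⊆ S ∧ r.neg ⊆ S ∧ r.nneg ⊆ S

/-- A program is over `S` if all its rules are over `S`. -/
def progOver (P : ASPProgram Atom) (S : Finset Atom) : Prop :=
  ∀ r ∈ P, ruleOver r S

/-- `I` satisfies (is a model of) rule `r`. -/
def satRule (I : Finset Atom) (r : ASPRule Atom) : Prop :=
  ((r.head ∪ r.neg) ∩ I).Nonempty ∨ ¬ (r.pos ∪ r.nneg ⊆ I)

/-- `I` is a model of program `P`. -/
def sat (I : Finset Atom) (P : ASPProgram Atom) : Prop :=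
  ∀ r ∈ P, satRule I r

/-- The GL-reduct `P^I`. -/
def reduct (P : ASPProgram Atom) (I : Finset Atom) : ASPProgram Atom :=
  (P.filter (fun r => r.neg ∩ I = ∅ ∧ r.nneg ⊆ I)).image
    (fun r => ⟨r.head, r.pos, ∅, ∅⟩)

/-- The answer sets of `P`: minimal models of the reduct. -/
def AS (P : ASPProgram Atom) : Set (Finset Atom) :=
  {I | sat I (reduct P I) ∧ ∀ J ⊂ I, ¬ sat J (reduct P I)}

/-- Projection of a program onto `𝒰 ∖ A`: rules with a head or negative-body atom
from `A` are dropped; in the remaining rules the atoms of `A` are removed from the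
positive and double-negated bodies. -/
def projAway (P : ASPProgram Atom) (A : Finset Atom) : ASPProgram Atom :=
  (P.filter (fun r => r.neg ∩ A = ∅ ∧ r.head ∩ A = ∅)).image
    (fun r => ⟨r.head, r.pos \ A, r.neg, r.nneg \ A⟩)

/-- `R` is `A`-separated: a union of a program over `𝒰 ∖ A` and a program over `A`. -/
def ASeparated (R : ASPProgram Atom) (A : Finset Atom) : Prop :=
  ∃ R₁ R₂ : ASPProgram Atom, R = R₁ ∪ R₂ ∧ progOver R₁ Aᶜ ∧ progOver R₂ A

/-- The defining equation of a (strong) `A`-simplification of `P` relative to `B`: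
`AS(P ∪ R)_{|Ā} = AS(Q ∪ R_{|Ā})` for every `A`-separated program `R` over `B`. -/
def SimpEq (P : ASPProgram Atom) (A B : Finset Atom) (Q : ASPProgram Atom) : Prop :=
  ∀ R : ASPProgram Atom, progOver R B → ASeparated R A →
    (fun I => I \ A) '' AS (P ∪ R) = AS (Q ∪ projAway R A)

/-- The SE-models of `P`. -/
def SE (P : ASPProgram Atom) : Set (Finset Atom × Finset Atom) :=
  {p | p.1 ⊆ p.2 ∧ sat p.2 P ∧ sat p.1 (reduct P p.2)}

/-- The (relativized) `B`-SE-models of `P`. -/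
def SEB (B : Finset Atom) (P : ASPProgram Atom) : Set (Finset Atom × Finset Atom) :=
  {p | (p.1 = p.2 ∨ p.1 ⊂ p.2 ∩ B) ∧ sat p.2 P ∧
    (∀ Y' ⊂ p.2, Y' ∩ B = p.2 ∩ B → ¬ sat Y' (reduct P p.2)) ∧
    (p.1 ⊂ p.2 → ∃ X' ⊆ p.2, X' ∩ B = p.1 ∧ sat X' (reduct P p.2))}

/-- `SE^{A₁,A₂}(P)`: the `A₂`-SE-models `⟨X,Y⟩` of `P` with `Y ⊆ A₁`. -/
def SERel (P : ASPProgram Atom) (A₁ A₂ : Finset Atom) : Set (Finset Atom × Finset Atom) :=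
  {p | p ∈ SEB A₂ P ∧ p.2 ⊆ A₁}

/-- `P` satisfies `Δʳ` for `A`, `B`. -/
def DeltaR (P : ASPProgram Atom) (A B : Finset Atom) : Prop :=
  (∀ Y : Finset Atom, (Y, Y) ∈ SEB B P → A ∩ B ⊆ Y) ∧
  (∀ X Y : Finset Atom, (X, Y) ∈ SE P → (Y, Y) ∈ SEB B P → X \ A = Y \ A → X = Y) ∧
  (∀ X Y : Finset Atom, (X, Y) ∈ SEB B P → (X ∪ (Y ∩ A ∩ B), Y) ∈ SEB B P)

/-- The family `𝓡^Y_{⟨P,A,B⟩}`. -/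
def RFam (P : ASPProgram Atom) (A B Y : Finset Atom) : Set (Set (Finset Atom)) :=
  {S | ∃ A' ⊆ A, (Y ∪ A', Y ∪ A') ∈ SEB B P ∧
    S = {Z | ∃ X : Finset Atom, (X, Y ∪ A') ∈ SEB B P ∧ Z = X \ A}}

/-- `P` satisfies criterion `Ω_{A,B}`: for some `Y ⊆ 𝒰 ∖ A` the family
`𝓡^Y_{⟨P,A,B⟩}` is non-empty and has no `⊆`-least element. -/
def OmegaCrit (P : ASPProgram Atom) (A B : Finset Atom) : Prop :=
  ∃ Y : Finset Atom, Y ⊆ Aᶜ ∧ (RFam P A B Y).Nonempty ∧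
    ¬ ∃ S ∈ RFam P A B Y, ∀ T ∈ RFam P A B Y, S ⊆ T

/-- `⋂ 𝓡^Y_{⟨P,A,B⟩}`, taken to be `∅` when the family is empty. -/
def RInter (P : ASPProgram Atom) (A B Y : Finset Atom) : Set (Finset Atom) :=
  {X | (RFam P A B Y).Nonempty ∧ ∀ S ∈ RFam P A B Y, X ∈ S}

/-- The `A`-`B`-SE-models `SE^B_A(P)` of `P`. -/
def SEBA (P : ASPProgram Atom) (A B : Finset Atom) : Set (Finset Atom × Finset Atom) :=
  {p | ∃ Y : Finset Atom, (Y, Y) ∈ SEB B P ∧ p = (Y \ A, Y \ A)} ∪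
  {p | ∃ X Y : Finset Atom, (X, Y) ∈ SEB B P ∧ X ⊂ Y ∧
    (∀ Y' : Finset Atom, (Y', Y') ∈ SEB B P → Y' \ A = Y \ A →
      ∃ X' : Finset Atom, (X', Y') ∈ SEB B P ∧ X' \ A = X \ A) ∧
    p = (X \ A, Y \ A)}

end Defs
section Lemmas
variable {Atom : Type} [DecidableEq Atom] [Fintype Atom]

lemma sat_union {I : Finset Atom} {P R : ASPProgram Atom} :
    sat I (P ∪ R) ↔ sat I P ∧ sat I R := by
  constructor
  · intro h; exact ⟨fun r hr => h r (Finset.mem_union_left _ hr),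
      fun r hr => h r (Finset.mem_union_right _ hr)⟩
  · rintro ⟨h1, h2⟩ r hr
    rcases Finset.mem_union.1 hr with h | h
    · exact h1 r h
    · exact h2 r h

lemma sat_reduct_iff {I Y : Finset Atom} {P : ASPProgram Atom} :
    sat I (reduct P Y) ↔ ∀ r ∈ P, r.neg ∩ Y = ∅ → r.nneg ⊆ Y →
      ((r.head ∩ I).Nonempty ∨ ¬ r.pos ⊆ I) := by
  unfold sat reduct satRule
  constructor
  · intro h r hr h1 h2
    have := h ⟨r.head, r.pos, ∅, ∅⟩ (Finset.mem_image.2 ⟨r, Finset.mem_filter.2 ⟨hr, h1, h2⟩, rfl⟩)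
    simpa using this
  · intro h r' hr'
    rcases Finset.mem_image.1 hr' with ⟨r, hr, rfl⟩
    rcases Finset.mem_filter.1 hr with ⟨hrP, h1, h2⟩
    simpa using h r hrP h1 h2

lemma sat_reduct_union {I Y : Finset Atom} {P R : ASPProgram Atom} :
    sat I (reduct (P ∪ R) Y) ↔ sat I (reduct P Y) ∧ sat I (reduct R Y) := by
  simp only [sat_reduct_iff]
  constructor
  · intro h
    exact ⟨fun r hr => h r (Finset.mem_union_left _ hr),
      fun r hr => h r (Finset.mem_union_right _ hr)⟩
  · rintro ⟨h1, h2⟩ r hr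
    rcases Finset.mem_union.1 hr with h | h
    · exact h1 r h
    · exact h2 r h

lemma sat_reduct_self {I : Finset Atom} {P : ASPProgram Atom} :
    sat I (reduct P I) ↔ sat I P := by
  rw [sat_reduct_iff]
  unfold sat satRule
  constructor
  · intro h r hr
    by_cases h1 : r.neg ∩ I = ∅
    · by_cases h2 : r.nneg ⊆ I
      · rcases h r hr h1 h2 with h3 | h3
        · exact Or.inl (h3.mono (Finset.inter_subset_inter (Finset.subset_union_left) le_rfl))
        · exact Or.inr (fun hc => h3 (le_trans Finset.subset_union_left hc))
      · exact Or.inr (fun hc => h2 (le_trans Finset.subset_union_right hc))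
    · left
      rcases Finset.nonempty_iff_ne_empty.2 h1 with ⟨x, hx⟩
      rcases Finset.mem_inter.1 hx with ⟨hxn, hxI⟩
      exact ⟨x, Finset.mem_inter.2 ⟨Finset.mem_union_right _ hxn, hxI⟩⟩
  · intro h r hr h1 h2
    rcases h r hr with h3 | h3
    · rcases h3 with ⟨x, hx⟩
      rcases Finset.mem_inter.1 hx with ⟨hxhn, hxI⟩
      rcases Finset.mem_union.1 hxhn with hh | hn
      · exact Or.inl ⟨x, Finset.mem_inter.2 ⟨hh, hxI⟩⟩
      · exact absurd (Finset.mem_inter.2 ⟨hn, hxI⟩) (by simp [h1])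
    · right
      intro hc
      exact h3 (Finset.union_subset hc h2)

/-- satisfaction of a reduct only depends on `I ∩ B` when the program is over `B`. -/
lemma sat_reduct_inter {I Y B : Finset Atom} {R : ASPProgram Atom} (hR : progOver R B) :
    sat I (reduct R Y) ↔ sat (I ∩ B) (reduct R Y) := by
  simp only [sat_reduct_iff]
  apply forall_congr'; intro r
  apply imp_congr_right; intro hr
  apply imp_congr_right; intro _
  apply imp_congr_right; intro _
  obtain ⟨hh, hp, -, -⟩ := hR r hr
  constructor
  · rintro (⟨x, hx⟩ | h)
    · rcases Finset.mem_inter.1 hx with ⟨h1, h2⟩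
      exact Or.inl ⟨x, Finset.mem_inter.2 ⟨h1, Finset.mem_inter.2 ⟨h2, hh h1⟩⟩⟩
    · exact Or.inr (fun hc => h (hc.trans Finset.inter_subset_left))
  · rintro (⟨x, hx⟩ | h)
    · rcases Finset.mem_inter.1 hx with ⟨h1, h2⟩
      exact Or.inl ⟨x, Finset.mem_inter.2 ⟨h1, (Finset.mem_inter.1 h2).1⟩⟩
    · exact Or.inr (fun hc => h (fun x hx => Finset.mem_inter.2 ⟨hc hx, hp hx⟩))

lemma mem_AS_iff {I : Finset Atom} {P : ASPProgram Atom} :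
    I ∈ AS P ↔ sat I (reduct P I) ∧ ∀ J ⊂ I, ¬ sat J (reduct P I) := Iff.rfl

end Lemmas
section Lemmas2
set_option linter.unusedSectionVars false
variable {Atom : Type} [DecidableEq Atom] [Fintype Atom]

lemma subset_union_sdiff_iff {s V A : Finset Atom} : s ⊆ V ∪ A ↔ s \ A ⊆ V := by
  constructor
  · intro h x hx
    rcases Finset.mem_sdiff.1 hx with ⟨h1, h2⟩
    rcases Finset.mem_union.1 (h h1) with h3 | h3
    · exact h3
    · exact absurd h3 h2
  · intro h x hx
    by_cases hA : x ∈ A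
    · exact Finset.mem_union_right _ hA
    · exact Finset.mem_union_left _ (h (Finset.mem_sdiff.2 ⟨hx, hA⟩))

lemma inter_union_right_of_disj {h V A : Finset Atom} (hd : h ∩ A = ∅) :
    h ∩ (V ∪ A) = h ∩ V := by
  ext x
  simp only [Finset.mem_inter, Finset.mem_union]
  constructor
  · rintro ⟨h1, h2 | h2⟩
    · exact ⟨h1, h2⟩
    · exact absurd (Finset.mem_inter.2 ⟨h1, h2⟩) (by simp [hd])
  · rintro ⟨h1, h2⟩; exact ⟨h1, Or.inl h2⟩

lemma mem_projAway {r' : ASPRule Atom} {P : ASPProgram Atom} {A : Finset Atom} :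
    r' ∈ projAway P A ↔ ∃ r ∈ P, r.neg ∩ A = ∅ ∧ r.head ∩ A = ∅ ∧
      r' = ⟨r.head, r.pos \ A, r.neg, r.nneg \ A⟩ := by
  unfold projAway
  simp only [Finset.mem_image, Finset.mem_filter]
  constructor
  · rintro ⟨r, ⟨h1, h2, h3⟩, rfl⟩; exact ⟨r, h1, h2, h3, rfl⟩
  · rintro ⟨r, h1, h2, h3, rfl⟩; exact ⟨r, ⟨h1, h2, h3⟩, rfl⟩

lemma projAway_union {P R : ASPProgram Atom} {A : Finset Atom} :
    projAway (P ∪ R) A = projAway P A ∪ projAway R A := by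
  unfold projAway; rw [Finset.filter_union, Finset.image_union]

lemma progOver_projAway {P : ASPProgram Atom} {A : Finset Atom} :
    progOver (projAway P A) Aᶜ := by
  intro r' hr'
  rcases mem_projAway.1 hr' with ⟨r, _, hn, hh, rfl⟩
  refine ⟨?_, ?_, ?_, ?_⟩ <;> intro x hx <;> simp only [Finset.mem_compl]
  · exact fun hA => by simp [Finset.eq_empty_iff_forall_notMem] at hh; exact hh x hx hA
  · exact (Finset.mem_sdiff.1 hx).2
  · exact fun hA => by simp [Finset.eq_empty_iff_forall_notMem] at hn; exact hn x hx hA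
  · exact (Finset.mem_sdiff.1 hx).2

/-- Lemma M: models of `P` containing `A` correspond to models of the projection. -/
lemma sat_projAway {V A : Finset Atom} {P : ASPProgram Atom} (hV : V ∩ A = ∅) :
    sat (V ∪ A) P ↔ sat V (projAway P A) := by
  constructor
  · intro h r' hr'
    rcases mem_projAway.1 hr' with ⟨r, hrP, hn, hh, rfl⟩
    rcases h r hrP with h1 | h1
    · left
      rw [show (r.head ∪ r.neg) ∩ (V ∪ A) = (r.head ∪ r.neg) ∩ V from
        inter_union_right_of_disj (by rw [Finset.union_inter_distrib_right, hn, hh]; simp)] at h1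
      exact h1
    · right
      intro hc
      apply h1
      rw [show r.pos \ A ∪ r.nneg \ A = (r.pos ∪ r.nneg) \ A from (Finset.union_sdiff_distrib _ _ _).symm] at hc
      exact subset_union_sdiff_iff.2 hc
  · intro h r hrP
    by_cases hh : r.head ∩ A = ∅
    · by_cases hn : r.neg ∩ A = ∅
      · have := h _ (mem_projAway.2 ⟨r, hrP, hn, hh, rfl⟩)
        rcases this with h1 | h1
        · left
          refine h1.mono ?_
          rw [inter_union_right_of_disj (by rw [Finset.union_inter_distrib_right, hn, hh]; simp)]
        · right
          intro hc
          apply h1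
          rw [show r.pos \ A ∪ r.nneg \ A = (r.pos ∪ r.nneg) \ A from (Finset.union_sdiff_distrib _ _ _).symm]
          exact subset_union_sdiff_iff.1 hc
      · left
        rcases Finset.nonempty_iff_ne_empty.2 hn with ⟨x, hx⟩
        rcases Finset.mem_inter.1 hx with ⟨h1, h2⟩
        exact ⟨x, Finset.mem_inter.2 ⟨Finset.mem_union_right _ h1, Finset.mem_union_right _ h2⟩⟩
    · left
      rcases Finset.nonempty_iff_ne_empty.2 hh with ⟨x, hx⟩
      rcases Finset.mem_inter.1 hx with ⟨h1, h2⟩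
      exact ⟨x, Finset.mem_inter.2 ⟨Finset.mem_union_left _ h1, Finset.mem_union_right _ h2⟩⟩

/-- Lemma M2: reduct satisfaction transfers through projection. -/
lemma sat_reduct_projAway {V W A : Finset Atom} {P : ASPProgram Atom} :
    sat (W ∪ A) (reduct P (V ∪ A)) ↔ sat W (reduct (projAway P A) V) := by
  rw [sat_reduct_iff, sat_reduct_iff (P := projAway P A)]
  constructor
  · intro h r' hr' h1 h2
    rcases mem_projAway.1 hr' with ⟨r, hrP, hn, hh, rfl⟩
    simp only at h1 h2 ⊢
    have hnY : r.neg ∩ (V ∪ A) = ∅ := by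
      rw [Finset.inter_union_distrib_left, h1, hn]; simp
    have hnn : r.nneg ⊆ V ∪ A := subset_union_sdiff_iff.2 h2
    rcases h r hrP hnY hnn with h3 | h3
    · left; rwa [inter_union_right_of_disj hh] at h3
    · right; exact fun hc => h3 (subset_union_sdiff_iff.2 hc)
  · intro h r hrP hnY hnn
    have hn : r.neg ∩ A = ∅ := by
      rw [Finset.inter_union_distrib_left] at hnY
      exact Finset.union_eq_empty.1 hnY |>.2
    by_cases hh : r.head ∩ A = ∅
    · have := h _ (mem_projAway.2 ⟨r, hrP, hn, hh, rfl⟩)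
      simp only at this
      have hnV : r.neg ∩ V = ∅ := by
        rw [Finset.inter_union_distrib_left] at hnY
        exact Finset.union_eq_empty.1 hnY |>.1
      rcases this hnV (subset_union_sdiff_iff.1 hnn) with h3 | h3
      · left; rw [inter_union_right_of_disj hh]; exact h3
      · right; exact fun hc => h3 (subset_union_sdiff_iff.1 hc)
    · left
      rcases Finset.nonempty_iff_ne_empty.2 hh with ⟨x, hx⟩
      rcases Finset.mem_inter.1 hx with ⟨h1, h2⟩
      exact ⟨x, Finset.mem_inter.2 ⟨h1, Finset.mem_union_right _ h2⟩⟩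

/-- Answer sets of programs over `Aᶜ` avoid `A`. -/
lemma AS_inter_empty {Z A : Finset Atom} {S : ASPProgram Atom}
    (hS : progOver S Aᶜ) (hZ : Z ∈ AS S) : Z ∩ A = ∅ := by
  rcases hZ with ⟨h1, h2⟩
  by_contra hne
  have hsub : Z \ A ⊂ Z := by
    constructor
    · exact Finset.sdiff_subset
    · intro hc
      rcases Finset.nonempty_iff_ne_empty.2 hne with ⟨x, hx⟩
      rcases Finset.mem_inter.1 hx with ⟨hxZ, hxA⟩
      exact (Finset.mem_sdiff.1 (hc hxZ)).2 hxA
  apply h2 _ hsub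
  rw [sat_reduct_iff] at h1 ⊢
  intro r hr hn hnn
  obtain ⟨hh, hp, -, -⟩ := hS r hr
  rcases h1 r hr hn hnn with h3 | h3
  · left
    rcases h3 with ⟨x, hx⟩
    rcases Finset.mem_inter.1 hx with ⟨hxh, hxZ⟩
    exact ⟨x, Finset.mem_inter.2 ⟨hxh, Finset.mem_sdiff.2 ⟨hxZ, Finset.mem_compl.1 (hh hxh)⟩⟩⟩
  · right; exact fun hc => h3 (hc.trans Finset.sdiff_subset)

/-- A program containing the falsum rule has no answer sets. -/
lemma AS_of_bot {S : ASPProgram Atom} (h : (⟨∅, ∅, ∅, ∅⟩ : ASPRule Atom) ∈ S) :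
    AS S = ∅ := by
  ext Z
  simp only [Set.mem_empty_iff_false, iff_false]
  rintro ⟨h1, -⟩
  rw [sat_reduct_iff] at h1
  have := h1 _ h (by simp) (by simp)
  simpa using this

end Lemmas2
section Lemmas3
set_option linter.unusedSectionVars false
variable {Atom : Type} [DecidableEq Atom] [Fintype Atom]

/-- Facts `x ←` for `x ∈ S`. -/
def facts (S : Finset Atom) : ASPProgram Atom :=
  S.image (fun x => ⟨{x}, ∅, ∅, ∅⟩)

/-- Constraints `← x` for `x ∈ S`. -/
def cons (S : Finset Atom) : ASPProgram Atom :=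
  S.image (fun x => ⟨∅, {x}, ∅, ∅⟩)

/-- Rules `y ← w` for `y ∈ K`, `w ∈ D`. -/
def spread (K D : Finset Atom) : ASPProgram Atom :=
  (K ×ˢ D).image (fun q => ⟨{q.1}, {q.2}, ∅, ∅⟩)

lemma sat_facts {I S : Finset Atom} : sat I (facts S) ↔ S ⊆ I := by
  unfold sat facts satRule
  simp only [Finset.mem_image, forall_exists_index]
  constructor
  · intro h x hx
    have := h ⟨{x}, ∅, ∅, ∅⟩ x ⟨hx, rfl⟩
    simpa [Finset.singleton_inter_of_mem, Finset.Nonempty] using this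
  · rintro h r x ⟨hx, rfl⟩
    simp only
    left
    exact ⟨x, by simp [h hx]⟩

lemma satRed_facts {I Y S : Finset Atom} : sat I (reduct (facts S) Y) ↔ S ⊆ I := by
  rw [sat_reduct_iff]
  unfold facts
  simp only [Finset.mem_image, forall_exists_index]
  constructor
  · intro h x hx
    have := h ⟨{x}, ∅, ∅, ∅⟩ x ⟨hx, rfl⟩ (by simp) (by simp)
    simpa [Finset.Nonempty] using this
  · rintro h r x ⟨hx, rfl⟩ _ _
    left
    exact ⟨x, by simp [h hx]⟩

lemma sat_cons {I S : Finset Atom} : sat I (cons S) ↔ ∀ x ∈ S, x ∉ I := by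
  unfold sat cons satRule
  simp only [Finset.mem_image, forall_exists_index]
  constructor
  · intro h x hx hxI
    have := h ⟨∅, {x}, ∅, ∅⟩ x ⟨hx, rfl⟩
    simp [Finset.Nonempty, Finset.singleton_subset_iff, hxI] at this
  · rintro h r x ⟨hx, rfl⟩
    simp only
    right
    simp [Finset.singleton_subset_iff]
    exact h x hx

lemma satRed_cons {I Y S : Finset Atom} : sat I (reduct (cons S) Y) ↔ ∀ x ∈ S, x ∉ I := by
  rw [sat_reduct_iff]
  unfold cons
  simp only [Finset.mem_image, forall_exists_index]
  constructor
  · intro h x hx hxI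
    have := h ⟨∅, {x}, ∅, ∅⟩ x ⟨hx, rfl⟩ (by simp) (by simp)
    simp [Finset.Nonempty, Finset.singleton_subset_iff, hxI] at this
  · rintro h r x ⟨hx, rfl⟩ _ _
    right
    simp [Finset.singleton_subset_iff]
    exact h x hx

lemma sat_spread {I K D : Finset Atom} :
    sat I (spread K D) ↔ ∀ w ∈ D, w ∈ I → K ⊆ I := by
  unfold sat spread satRule
  simp only [Finset.mem_image, forall_exists_index]
  constructor
  · intro h w hw hwI y hy
    have := h ⟨{y}, {w}, ∅, ∅⟩ (y, w) ⟨Finset.mk_mem_product hy hw, rfl⟩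
    simp [Finset.Nonempty, Finset.singleton_subset_iff, hwI] at this
    exact this
  · rintro h r q ⟨hq, rfl⟩
    rcases Finset.mem_product.1 hq with ⟨h1, h2⟩
    simp only
    by_cases hw : q.2 ∈ I
    · left; exact ⟨q.1, by simp [h q.2 h2 hw h1]⟩
    · right; simp [Finset.singleton_subset_iff, hw]

lemma satRed_spread {I Y K D : Finset Atom} :
    sat I (reduct (spread K D) Y) ↔ ∀ w ∈ D, w ∈ I → K ⊆ I := by
  rw [sat_reduct_iff]
  unfold spread
  simp only [Finset.mem_image, forall_exists_index]
  constructor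
  · intro h w hw hwI y hy
    have := h ⟨{y}, {w}, ∅, ∅⟩ (y, w) ⟨Finset.mk_mem_product hy hw, rfl⟩ (by simp) (by simp)
    simp [Finset.Nonempty, Finset.singleton_subset_iff, hwI] at this
    exact this
  · rintro h r q ⟨hq, rfl⟩ _ _
    rcases Finset.mem_product.1 hq with ⟨h1, h2⟩
    by_cases hw : q.2 ∈ I
    · left; exact ⟨q.1, by simp [h q.2 h2 hw h1]⟩
    · right; simp [Finset.singleton_subset_iff, hw]

lemma facts_over {S T : Finset Atom} (h : S ⊆ T) : progOver (facts S) T := by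
  rintro r hr
  rcases Finset.mem_image.1 hr with ⟨x, hx, rfl⟩
  exact ⟨by simp [Finset.singleton_subset_iff, h hx], by simp, by simp, by simp⟩

lemma cons_over {S T : Finset Atom} (h : S ⊆ T) : progOver (cons S) T := by
  rintro r hr
  rcases Finset.mem_image.1 hr with ⟨x, hx, rfl⟩
  exact ⟨by simp, by simp [Finset.singleton_subset_iff, h hx], by simp, by simp⟩

lemma spread_over {K D T : Finset Atom} (hK : K ⊆ T) (hD : D ⊆ T) :
    progOver (spread K D) T := by
  rintro r hr
  rcases Finset.mem_image.1 hr with ⟨q, hq, rfl⟩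
  rcases Finset.mem_product.1 hq with ⟨h1, h2⟩
  exact ⟨by simp [Finset.singleton_subset_iff, hK h1], by simp [Finset.singleton_subset_iff, hD h2],
    by simp, by simp⟩

lemma progOver_union {R₁ R₂ : ASPProgram Atom} {T : Finset Atom}
    (h1 : progOver R₁ T) (h2 : progOver R₂ T) : progOver (R₁ ∪ R₂) T := by
  intro r hr
  rcases Finset.mem_union.1 hr with h | h
  · exact h1 r h
  · exact h2 r h

lemma facts_union {S T : Finset Atom} : facts (S ∪ T) = facts S ∪ facts T :=
  Finset.image_union _ _

lemma projAway_facts {S A : Finset Atom} : projAway (facts S) A = facts (S \ A) := by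
  ext r'
  rw [mem_projAway]
  unfold facts
  simp only [Finset.mem_image]
  constructor
  · rintro ⟨r, ⟨x, hx, rfl⟩, -, hh, rfl⟩
    refine ⟨x, Finset.mem_sdiff.2 ⟨hx, ?_⟩, by simp⟩
    intro hxA
    simp only at hh
    rw [Finset.singleton_inter_of_mem hxA] at hh
    simp at hh
  · rintro ⟨x, hx, rfl⟩
    rcases Finset.mem_sdiff.1 hx with ⟨h1, h2⟩
    exact ⟨⟨{x}, ∅, ∅, ∅⟩, ⟨x, h1, rfl⟩, by simp, by simp [Finset.singleton_inter_of_notMem h2],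
      by simp⟩

lemma projAway_cons_of {S A : Finset Atom} (hS : S ∩ A = ∅) :
    projAway (cons S) A = cons S := by
  ext r'
  rw [mem_projAway]
  unfold cons
  simp only [Finset.mem_image]
  constructor
  · rintro ⟨r, ⟨x, hx, rfl⟩, -, -, rfl⟩
    refine ⟨x, hx, ?_⟩
    have hxA : x ∉ A := fun hc => by
      have : x ∈ S ∩ A := Finset.mem_inter.2 ⟨hx, hc⟩
      simp [hS] at this
    simp [Finset.sdiff_eq_self_of_disjoint, Finset.singleton_inter_of_notMem hxA]
    rw [Finset.sdiff_eq_self_of_disjoint (by simp [Finset.disjoint_singleton_left, hxA])]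
  · rintro ⟨x, hx, rfl⟩
    have hxA : x ∉ A := fun hc => by
      have : x ∈ S ∩ A := Finset.mem_inter.2 ⟨hx, hc⟩
      simp [hS] at this
    refine ⟨⟨∅, {x}, ∅, ∅⟩, ⟨x, hx, rfl⟩, by simp, by simp, ?_⟩
    simp only
    rw [Finset.sdiff_eq_self_of_disjoint (by simp [Finset.disjoint_singleton_left, hxA])]
    simp

lemma bot_mem_projAway_cons {S A : Finset Atom} {a : Atom} (haS : a ∈ S) (haA : a ∈ A) :
    (⟨∅, ∅, ∅, ∅⟩ : ASPRule Atom) ∈ projAway (cons S) A := by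
  rw [mem_projAway]
  refine ⟨⟨∅, {a}, ∅, ∅⟩, Finset.mem_image.2 ⟨a, haS, rfl⟩, by simp, by simp, ?_⟩
  have h1 : ({a} : Finset Atom) \ A = ∅ :=
    Finset.sdiff_eq_empty_iff_subset.2 (Finset.singleton_subset_iff.2 haA)
  simp [h1]

lemma projAway_spread {K D A : Finset Atom} (hK : K ∩ A = ∅) (hD : D ∩ A = ∅) :
    projAway (spread K D) A = spread K D := by
  ext r'
  rw [mem_projAway]
  unfold spread
  simp only [Finset.mem_image]
  constructor
  · rintro ⟨r, ⟨q, hq, rfl⟩, -, -, rfl⟩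
    rcases Finset.mem_product.1 hq with ⟨h1, h2⟩
    have h2A : q.2 ∉ A := fun hc => by
      have : q.2 ∈ D ∩ A := Finset.mem_inter.2 ⟨h2, hc⟩
      simp [hD] at this
    refine ⟨q, hq, ?_⟩
    simp only
    rw [Finset.sdiff_eq_self_of_disjoint (by simp [Finset.disjoint_singleton_left, h2A])]
    simp
  · rintro ⟨q, hq, rfl⟩
    rcases Finset.mem_product.1 hq with ⟨h1, h2⟩
    have h1A : q.1 ∉ A := fun hc => by
      have : q.1 ∈ K ∩ A := Finset.mem_inter.2 ⟨h1, hc⟩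
      simp [hK] at this
    have h2A : q.2 ∉ A := fun hc => by
      have : q.2 ∈ D ∩ A := Finset.mem_inter.2 ⟨h2, hc⟩
      simp [hD] at this
    refine ⟨⟨{q.1}, {q.2}, ∅, ∅⟩, ⟨q, hq, rfl⟩, by simp,
      by simp [Finset.singleton_inter_of_notMem h1A], ?_⟩
    simp only
    rw [Finset.sdiff_eq_self_of_disjoint (by simp [Finset.disjoint_singleton_left, h2A])]
    simp

end Lemmas3
section Lemmas4
set_option linter.unusedSectionVars false
variable {Atom : Type} [DecidableEq Atom] [Fintype Atom]

lemma mem_SEB {X Y B : Finset Atom} {P : ASPProgram Atom} :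
    (X, Y) ∈ SEB B P ↔ (X = Y ∨ X ⊂ Y ∩ B) ∧ sat Y P ∧
      (∀ Y' ⊂ Y, Y' ∩ B = Y ∩ B → ¬ sat Y' (reduct P Y)) ∧
      (X ⊂ Y → ∃ X' ⊆ Y, X' ∩ B = X ∧ sat X' (reduct P Y)) := Iff.rfl

lemma SEB_total_iff {Y B : Finset Atom} {P : ASPProgram Atom} :
    (Y, Y) ∈ SEB B P ↔ sat Y P ∧
      (∀ Y' ⊂ Y, Y' ∩ B = Y ∩ B → ¬ sat Y' (reduct P Y)) := by
  rw [mem_SEB]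
  constructor
  · rintro ⟨-, h1, h2, -⟩; exact ⟨h1, h2⟩
  · rintro ⟨h1, h2⟩
    exact ⟨Or.inl rfl, h1, h2, fun hc => absurd hc (ssubset_irrefl _)⟩

/-- Answer sets of `P ∪ R` with `R` over `B` give total `B`-SE-models of `P`. -/
lemma AS_total {Y B : Finset Atom} {P R : ASPProgram Atom}
    (hR : progOver R B) (hY : Y ∈ AS (P ∪ R)) : (Y, Y) ∈ SEB B P := by
  rcases hY with ⟨h1, h2⟩
  rcases sat_reduct_union.1 h1 with ⟨hP, hRr⟩
  rw [SEB_total_iff]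
  refine ⟨sat_reduct_self.1 hP, ?_⟩
  intro Y' hss heq hsatP
  have hsatR : sat Y' (reduct R Y) := by
    rw [sat_reduct_inter hR, heq, ← sat_reduct_inter hR]
    exact hRr
  exact h2 Y' hss (sat_reduct_union.2 ⟨hsatP, hsatR⟩)

lemma eq_of_sdiff_eq {Y Z A : Finset Atom} (hY : A ⊆ Y) (hZ : A ⊆ Z)
    (h : Z \ A = Y \ A) : Z = Y := by
  rw [← Finset.sdiff_union_of_subset hZ, ← Finset.sdiff_union_of_subset hY, h]

/-- Forcing `Y ∩ B` with facts and `B \ Y` with constraints makes a total `B`-SE-model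
an answer set of the union. -/
lemma AS_forced {Y B : Finset Atom} {P S : ASPProgram Atom}
    (hYY : (Y, Y) ∈ SEB B P) (hS : S = facts (Y ∩ B) ∪ cons (B \ Y)) :
    Y ∈ AS (P ∪ S) := by
  rcases SEB_total_iff.1 hYY with ⟨hsat, hmin⟩
  subst hS
  constructor
  · apply sat_reduct_self.2
    apply sat_union.2
    refine ⟨hsat, sat_union.2 ⟨sat_facts.2 Finset.inter_subset_left, sat_cons.2 ?_⟩⟩
    intro x hx
    exact (Finset.mem_sdiff.1 hx).2
  · intro J hJ hsatJ
    rcases sat_reduct_union.1 hsatJ with ⟨hsP, hsS⟩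
    rcases sat_reduct_union.1 hsS with ⟨hsF, hsC⟩
    have hF : Y ∩ B ⊆ J := satRed_facts.1 hsF
    have hC : ∀ x ∈ B \ Y, x ∉ J := satRed_cons.1 hsC
    have heq : J ∩ B = Y ∩ B := by
      ext x
      constructor
      · intro hx
        rcases Finset.mem_inter.1 hx with ⟨hxJ, hxB⟩
        by_cases hxY : x ∈ Y
        · exact Finset.mem_inter.2 ⟨hxY, hxB⟩
        · exact absurd hxJ (hC x (Finset.mem_sdiff.2 ⟨hxB, hxY⟩))
      · intro hx
        exact Finset.mem_inter.2 ⟨hF hx, (Finset.mem_inter.1 hx).2⟩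
    exact hmin J hJ heq hsP

/-- For an `A`-separated `R` with `A ⊆ Y` and `Y ⊨ R`, adding `A` preserves
satisfaction of the reduct. -/
lemma sat_reduct_add_A {J Y A : Finset Atom} {R R₁ R₂ : ASPProgram Atom}
    (hsplit : R = R₁ ∪ R₂) (hR1 : progOver R₁ Aᶜ) (hR2 : progOver R₂ A)
    (hAY : A ⊆ Y) (hYR : sat Y R) (hJ : sat J (reduct R Y)) :
    sat (J ∪ A) (reduct R Y) := by
  rw [sat_reduct_iff] at hJ ⊢
  intro r hr hn hnn
  rcases Finset.mem_union.1 (hsplit ▸ hr) with hmem | hmem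
  · obtain ⟨-, hp, -, -⟩ := hR1 r hmem
    rcases hJ r hr hn hnn with h1 | h1
    · exact Or.inl (h1.mono (Finset.inter_subset_inter le_rfl Finset.subset_union_left))
    · right
      intro hc
      apply h1
      intro x hx
      rcases Finset.mem_union.1 (hc hx) with h2 | h2
      · exact h2
      · exact absurd h2 (Finset.mem_compl.1 (hp hx))
  · obtain ⟨hh, hp, -, hnn'⟩ := hR2 r hmem
    have := hYR r hr
    rcases this with h1 | h1
    · rcases h1 with ⟨x, hx⟩
      rcases Finset.mem_inter.1 hx with ⟨hxhn, hxY⟩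
      rcases Finset.mem_union.1 hxhn with h2 | h2
      · left
        exact ⟨x, Finset.mem_inter.2 ⟨h2, Finset.mem_union_right _ (hh h2)⟩⟩
      · exact absurd (Finset.mem_inter.2 ⟨h2, hxY⟩) (by simp [hn])
    · exfalso
      apply h1
      apply Finset.union_subset (hp.trans hAY) (hnn'.trans hAY)

end Lemmas4
section Lemmas5
set_option linter.unusedSectionVars false
variable {Atom : Type} [DecidableEq Atom] [Fintype Atom]

lemma sdiff_subset_compl {s A : Finset Atom} : s \ A ⊆ Aᶜ := by
  intro x hx
  exact Finset.mem_compl.2 (Finset.mem_sdiff.1 hx).2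

lemma cons_union {S T : Finset Atom} : cons (S ∪ T) = cons S ∪ cons T :=
  Finset.image_union _ _

lemma sep2 {A T C : Finset Atom} : ASeparated (facts T ∪ cons C) A := by
  refine ⟨facts (T \ A) ∪ cons (C \ A), facts (T ∩ A) ∪ cons (C ∩ A), ?_, ?_, ?_⟩
  · conv_lhs => rw [← Finset.sdiff_union_inter T A, ← Finset.sdiff_union_inter C A]
    rw [facts_union, cons_union]
    ext r
    simp only [Finset.mem_union]
    tauto
  · exact progOver_union (facts_over sdiff_subset_compl) (cons_over sdiff_subset_compl)
  · exact progOver_union (facts_over Finset.inter_subset_right)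
      (cons_over Finset.inter_subset_right)

lemma sep3 {A T C K D : Finset Atom} (hC : C ⊆ Aᶜ) (hK : K ⊆ Aᶜ) (hD : D ⊆ Aᶜ) :
    ASeparated (facts T ∪ cons C ∪ spread K D) A := by
  refine ⟨facts (T \ A) ∪ cons C ∪ spread K D, facts (T ∩ A), ?_, ?_, ?_⟩
  · conv_lhs => rw [← Finset.sdiff_union_inter T A]
    rw [facts_union]
    ext r
    simp only [Finset.mem_union]
    tauto
  · exact progOver_union (progOver_union (facts_over sdiff_subset_compl) (cons_over hC))
      (spread_over hK hD)
  · exact facts_over Finset.inter_subset_right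

lemma push_fwd {A B Y : Finset Atom} {P Q R : ASPProgram Atom}
    (H : SimpEq P A B Q) (hover : progOver R B) (hsep : ASeparated R A)
    (hY : Y ∈ AS (P ∪ R)) : Y \ A ∈ AS (Q ∪ projAway R A) := by
  rw [← H R hover hsep]
  exact ⟨Y, hY, rfl⟩

lemma pull_back {A B Y : Finset Atom} {P Q R : ASPProgram Atom} (hAB : A ⊆ B)
    (H : SimpEq P A B Q) (s1 : ∀ Z, (Z, Z) ∈ SEB B P → A ∩ B ⊆ Z)
    (hover : progOver R B) (hsep : ASeparated R A) (hAY : A ⊆ Y)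
    (hmem : Y \ A ∈ AS (Q ∪ projAway R A)) : Y ∈ AS (P ∪ R) := by
  rw [← H R hover hsep] at hmem
  rcases hmem with ⟨Z, hZ, hZeq⟩
  have hAZ : A ⊆ Z := fun a ha =>
    s1 Z (AS_total hover hZ) (Finset.mem_inter.2 ⟨ha, hAB ha⟩)
  rwa [eq_of_sdiff_eq hAY hAZ hZeq] at hZ

lemma cond_s1 {A B : Finset Atom} {P Q : ASPProgram Atom} (hAB : A ⊆ B)
    (H : SimpEq P A B Q) : ∀ Y, (Y, Y) ∈ SEB B P → A ∩ B ⊆ Y := by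
  intro Y hYY a ha
  by_contra haY
  rcases Finset.mem_inter.1 ha with ⟨haA, haB⟩
  have hover : progOver (facts (Y ∩ B) ∪ cons (B \ Y)) B :=
    progOver_union (facts_over Finset.inter_subset_right) (cons_over Finset.sdiff_subset)
  have hY : Y ∈ AS (P ∪ (facts (Y ∩ B) ∪ cons (B \ Y))) := AS_forced hYY rfl
  have hpush := push_fwd H hover sep2 hY
  have hbot : (⟨∅, ∅, ∅, ∅⟩ : ASPRule Atom) ∈
      Q ∪ projAway (facts (Y ∩ B) ∪ cons (B \ Y)) A := by
    apply Finset.mem_union_right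
    rw [projAway_union]
    exact Finset.mem_union_right _
      (bot_mem_projAway_cons (Finset.mem_sdiff.2 ⟨haB, haY⟩) haA)
  rw [AS_of_bot hbot] at hpush
  exact hpush

lemma cond_s2 {A B : Finset Atom} {P Q : ASPProgram Atom} (hAB : A ⊆ B)
    (H : SimpEq P A B Q) (s1 : ∀ Z, (Z, Z) ∈ SEB B P → A ∩ B ⊆ Z) :
    ∀ X Y : Finset Atom, (X, Y) ∈ SE P → (Y, Y) ∈ SEB B P → X \ A = Y \ A → X = Y := by
  intro X Y hSE hYY hdiff
  by_contra hne
  rcases hSE with ⟨hsub, hsatY, hsatX⟩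
  simp only at hsub hsatY hsatX
  have hXss : X ⊂ Y := ⟨hsub, fun hc => hne (le_antisymm hsub hc)⟩
  have hAY : A ⊆ Y := fun a ha => s1 Y hYY (Finset.mem_inter.2 ⟨ha, hAB ha⟩)
  have hBYA : (B \ Y) ∩ A = ∅ := by
    rw [Finset.eq_empty_iff_forall_notMem]
    intro x hx
    rcases Finset.mem_inter.1 hx with ⟨h1, h2⟩
    exact (Finset.mem_sdiff.1 h1).2 (hAY h2)
  have hfeq : (Y ∩ B) \ A = (X ∩ B) \ A := by
    ext x
    simp only [Finset.mem_sdiff, Finset.mem_inter]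
    constructor
    · rintro ⟨⟨h1, h2⟩, h3⟩
      have : x ∈ X \ A := hdiff ▸ Finset.mem_sdiff.2 ⟨h1, h3⟩
      exact ⟨⟨(Finset.mem_sdiff.1 this).1, h2⟩, h3⟩
    · rintro ⟨⟨h1, h2⟩, h3⟩
      have : x ∈ Y \ A := hdiff ▸ Finset.mem_sdiff.2 ⟨h1, h3⟩
      exact ⟨⟨(Finset.mem_sdiff.1 this).1, h2⟩, h3⟩
  have hproj : projAway (facts (Y ∩ B) ∪ cons (B \ Y)) A
      = projAway (facts (X ∩ B) ∪ cons (B \ Y)) A := by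
    rw [projAway_union, projAway_union, projAway_facts, projAway_facts,
      projAway_cons_of hBYA, hfeq]
  have hover : progOver (facts (Y ∩ B) ∪ cons (B \ Y)) B :=
    progOver_union (facts_over Finset.inter_subset_right) (cons_over Finset.sdiff_subset)
  have hover' : progOver (facts (X ∩ B) ∪ cons (B \ Y)) B :=
    progOver_union (facts_over Finset.inter_subset_right) (cons_over Finset.sdiff_subset)
  have hY : Y ∈ AS (P ∪ (facts (Y ∩ B) ∪ cons (B \ Y))) := AS_forced hYY rfl
  have hpush := push_fwd H hover sep2 hY
  rw [hproj] at hpush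
  have hY' := pull_back hAB H s1 hover' sep2 hAY hpush
  apply hY'.2 X hXss
  apply sat_reduct_union.2
  refine ⟨hsatX, sat_reduct_union.2 ⟨satRed_facts.2 Finset.inter_subset_left, satRed_cons.2 ?_⟩⟩
  intro x hx hxX
  exact (Finset.mem_sdiff.1 hx).2 (hsub hxX)

lemma cond_s3 {A B : Finset Atom} {P Q : ASPProgram Atom} (hAB : A ⊆ B)
    (H : SimpEq P A B Q) (s1 : ∀ Z, (Z, Z) ∈ SEB B P → A ∩ B ⊆ Z) :
    ∀ X Y : Finset Atom, (X, Y) ∈ SEB B P → (X ∪ (Y ∩ A ∩ B), Y) ∈ SEB B P := by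
  intro X Y hXY
  rcases hXY with ⟨hfirst, hsatY, hii, hiii⟩
  simp only at hfirst hsatY hii hiii
  rcases hfirst with rfl | hXss
  · rw [Finset.union_eq_left.2 (Finset.inter_subset_left.trans Finset.inter_subset_left)]
    exact SEB_total_iff.2 ⟨hsatY, hii⟩
  · -- proper case
    have hYY : (Y, Y) ∈ SEB B P := SEB_total_iff.2 ⟨hsatY, hii⟩
    have hAY : A ⊆ Y := fun a ha => s1 Y hYY (Finset.mem_inter.2 ⟨ha, hAB ha⟩)
    have hYAB : Y ∩ A ∩ B = A := by
      ext x
      simp only [Finset.mem_inter]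
      exact ⟨fun h => h.1.2, fun h => ⟨⟨hAY h, h⟩, hAB h⟩⟩
    rw [hYAB]
    by_contra hno
    have hXB : X ⊆ Y ∩ B := hXss.subset
    have hXpsub : X ∪ A ⊆ Y ∩ B := Finset.union_subset hXB
      (fun a ha => Finset.mem_inter.2 ⟨hAY ha, hAB ha⟩)
    have hXssY : X ⊂ Y := lt_of_lt_of_le hXss Finset.inter_subset_left
    -- the programs
    have hDA : ((Y ∩ B) \ (X ∪ A)) ⊆ Aᶜ := fun x hx => Finset.mem_compl.2
      (fun hc => (Finset.mem_sdiff.1 hx).2 (Finset.mem_union_right _ hc))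
    have hKA : ((Y ∩ B) \ A) ⊆ Aᶜ := sdiff_subset_compl
    have hCA : (B \ Y) ⊆ Aᶜ := fun x hx => Finset.mem_compl.2
      (fun hc => (Finset.mem_sdiff.1 hx).2 (hAY hc))
    have hBYA : (B \ Y) ∩ A = ∅ := by
      rw [Finset.eq_empty_iff_forall_notMem]
      intro x hx
      rcases Finset.mem_inter.1 hx with ⟨h1, h2⟩
      exact absurd h2 (Finset.mem_compl.1 (hCA h1))
    have hKA' : ((Y ∩ B) \ A) ∩ A = ∅ := by
      rw [Finset.eq_empty_iff_forall_notMem]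
      intro x hx
      rcases Finset.mem_inter.1 hx with ⟨h1, h2⟩
      exact absurd h2 (Finset.mem_compl.1 (hKA h1))
    have hDA' : ((Y ∩ B) \ (X ∪ A)) ∩ A = ∅ := by
      rw [Finset.eq_empty_iff_forall_notMem]
      intro x hx
      rcases Finset.mem_inter.1 hx with ⟨h1, h2⟩
      exact absurd h2 (Finset.mem_compl.1 (hDA h1))
    have hproj : projAway (facts (X ∪ A) ∪ cons (B \ Y) ∪ spread ((Y ∩ B) \ A) ((Y ∩ B) \ (X ∪ A))) A
        = projAway (facts X ∪ cons (B \ Y) ∪ spread ((Y ∩ B) \ A) ((Y ∩ B) \ (X ∪ A))) A := by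
      rw [projAway_union, projAway_union, projAway_union, projAway_union,
        projAway_facts, projAway_facts, projAway_cons_of hBYA, projAway_spread hKA' hDA',
        Finset.union_sdiff_distrib, Finset.sdiff_self, Finset.union_empty]
    have hXB' : X ⊆ B := hXB.trans Finset.inter_subset_right
    have hover : progOver (facts X ∪ cons (B \ Y) ∪ spread ((Y ∩ B) \ A) ((Y ∩ B) \ (X ∪ A))) B :=
      progOver_union (progOver_union (facts_over hXB') (cons_over Finset.sdiff_subset))
        (spread_over (Finset.sdiff_subset.trans Finset.inter_subset_right)
          (Finset.sdiff_subset.trans Finset.inter_subset_right))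
    have hover' : progOver (facts (X ∪ A) ∪ cons (B \ Y) ∪ spread ((Y ∩ B) \ A) ((Y ∩ B) \ (X ∪ A))) B :=
      progOver_union (progOver_union (facts_over (Finset.union_subset hXB' hAB))
        (cons_over Finset.sdiff_subset))
        (spread_over (Finset.sdiff_subset.trans Finset.inter_subset_right)
          (Finset.sdiff_subset.trans Finset.inter_subset_right))
    -- Claim 1 : Y ∈ AS (P ∪ R')
    have hclaim1 : Y ∈ AS (P ∪ (facts (X ∪ A) ∪ cons (B \ Y) ∪ spread ((Y ∩ B) \ A) ((Y ∩ B) \ (X ∪ A)))) := by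
      constructor
      · apply sat_reduct_self.2
        apply sat_union.2
        refine ⟨hsatY, sat_union.2 ⟨sat_union.2 ⟨sat_facts.2 (hXpsub.trans Finset.inter_subset_left),
          sat_cons.2 (fun x hx => (Finset.mem_sdiff.1 hx).2)⟩, sat_spread.2 ?_⟩⟩
        intro w _ _
        exact Finset.sdiff_subset.trans Finset.inter_subset_left
      · intro J hJss hsatJ
        rcases sat_reduct_union.1 hsatJ with ⟨hsP, hsS⟩
        rcases sat_reduct_union.1 hsS with ⟨hsFC, hsSp⟩
        rcases sat_reduct_union.1 hsFC with ⟨hsF, hsC⟩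
        have hXpJ : X ∪ A ⊆ J := satRed_facts.1 hsF
        have hCJ : ∀ x ∈ B \ Y, x ∉ J := satRed_cons.1 hsC
        have hSpJ : ∀ w ∈ (Y ∩ B) \ (X ∪ A), w ∈ J → (Y ∩ B) \ A ⊆ J := satRed_spread.1 hsSp
        have hJB : J ∩ B ⊆ Y ∩ B := by
          intro x hx
          rcases Finset.mem_inter.1 hx with ⟨hxJ, hxB⟩
          by_cases hxY : x ∈ Y
          · exact Finset.mem_inter.2 ⟨hxY, hxB⟩
          · exact absurd hxJ (hCJ x (Finset.mem_sdiff.2 ⟨hxB, hxY⟩))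
        by_cases hw : ∃ w ∈ (Y ∩ B) \ (X ∪ A), w ∈ J
        · rcases hw with ⟨w, hw1, hw2⟩
          have hKJ : (Y ∩ B) \ A ⊆ J := hSpJ w hw1 hw2
          have heq : J ∩ B = Y ∩ B := by
            apply Finset.Subset.antisymm hJB
            intro x hx
            by_cases hxA : x ∈ A
            · exact Finset.mem_inter.2 ⟨hXpJ (Finset.mem_union_right _ hxA),
                (Finset.mem_inter.1 hx).2⟩
            · exact Finset.mem_inter.2 ⟨hKJ (Finset.mem_sdiff.2 ⟨hx, hxA⟩),
                (Finset.mem_inter.1 hx).2⟩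
          exact hii J hJss heq hsP
        · push_neg at hw
          have heq : J ∩ B = X ∪ A := by
            apply Finset.Subset.antisymm
            · intro x hx
              by_contra hc
              exact hw x (Finset.mem_sdiff.2 ⟨hJB hx, hc⟩) (Finset.mem_inter.1 hx).1
            · intro x hx
              exact Finset.mem_inter.2 ⟨hXpJ hx, (Finset.mem_inter.1 (hXpsub hx)).2⟩
          by_cases hXpB : X ∪ A = Y ∩ B
          · exact hii J hJss (heq.trans hXpB) hsP
          · apply hno
            refine ⟨Or.inr ⟨hXpsub, fun hc => hXpB (Finset.Subset.antisymm hXpsub hc)⟩,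
              hsatY, hii, ?_⟩
            intro _
            exact ⟨J, hJss.subset, heq, hsP⟩
    -- transport to the other program and back
    have hpush := push_fwd H hover' (sep3 hCA hKA hDA) hclaim1
    rw [hproj] at hpush
    have hYR := pull_back hAB H s1 hover (sep3 hCA hKA hDA) hAY hpush
    -- contradiction with minimality of Y
    rcases hiii hXssY with ⟨X', hX'Y, hX'B, hX'P⟩
    have hX'ss : X' ⊂ Y :=
      ⟨hX'Y, fun hc => hXss.ne (by rw [← hX'B, Finset.Subset.antisymm hX'Y hc])⟩
    apply hYR.2 X' hX'ss
    apply sat_reduct_union.2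
    refine ⟨hX'P, sat_reduct_union.2 ⟨sat_reduct_union.2
      ⟨satRed_facts.2 ?_, satRed_cons.2 ?_⟩, satRed_spread.2 ?_⟩⟩
    · rw [← hX'B]; exact Finset.inter_subset_left
    · intro x hx hxX'
      exact (Finset.mem_sdiff.1 hx).2 (hX'Y hxX')
    · intro w hw hwX'
      exfalso
      rcases Finset.mem_sdiff.1 hw with ⟨hw1, hw2⟩
      apply hw2
      have hwb : w ∈ X' ∩ B := Finset.mem_inter.2 ⟨hwX', (Finset.mem_inter.1 hw1).2⟩
      rw [hX'B] at hwb
      exact Finset.mem_union_left _ hwb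

end Lemmas5
section Lemmas6
set_option linter.unusedSectionVars false
variable {Atom : Type} [DecidableEq Atom] [Fintype Atom]

lemma forward {A B : Finset Atom} {P : ASPProgram Atom} (hAB : A ⊆ B)
    (hΔ : DeltaR P A B) : SimpEq P A B (projAway P A) := by
  obtain ⟨hs1, hs2, hs3⟩ := hΔ
  intro R hover hsep
  obtain ⟨R₁, R₂, hsplit, hR1, hR2⟩ := hsep
  ext V
  simp only [Set.mem_image]
  constructor
  · rintro ⟨Y, hYAS, rfl⟩
    have hAY : A ⊆ Y := fun a ha =>
      hs1 Y (AS_total hover hYAS) (Finset.mem_inter.2 ⟨ha, hAB ha⟩)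
    have hVA : (Y \ A) ∩ A = ∅ := by
      rw [Finset.eq_empty_iff_forall_notMem]
      intro x hx
      exact (Finset.mem_sdiff.1 (Finset.mem_inter.1 hx).1).2 (Finset.mem_inter.1 hx).2
    have hYeq : (Y \ A) ∪ A = Y := Finset.sdiff_union_of_subset hAY
    constructor
    · apply sat_reduct_self.2
      apply sat_union.2
      have h1 : sat (Y \ A) (projAway (P ∪ R) A) := by
        rw [← sat_projAway hVA, hYeq]
        exact sat_reduct_self.1 hYAS.1
      rw [projAway_union] at h1
      exact sat_union.1 h1
    · intro W hWss hsatW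
      have hWss' : W ∪ A ⊂ Y := by
        rw [← hYeq]
        constructor
        · exact Finset.union_subset_union hWss.subset (Finset.Subset.refl A)
        · intro hc
          apply hWss.ne
          apply Finset.Subset.antisymm hWss.subset
          intro x hx
          rcases Finset.mem_union.1 (hc (Finset.mem_union_left _ hx)) with h | h
          · exact h
          · exact absurd h (Finset.mem_sdiff.1 hx).2
      rw [← projAway_union] at hsatW
      have hsat' := (sat_reduct_projAway (P := P ∪ R)).2 hsatW
      rw [hYeq] at hsat'
      exact hYAS.2 (W ∪ A) hWss' hsat'
  · intro hVAS
    have hVA : V ∩ A = ∅ :=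
      AS_inter_empty (progOver_union progOver_projAway progOver_projAway) hVAS
    have hVeq : (V ∪ A) \ A = V := by
      rw [Finset.union_sdiff_right]
      exact Finset.sdiff_eq_self_of_disjoint (Finset.disjoint_iff_inter_eq_empty.2 hVA)
    refine ⟨V ∪ A, ?_, hVeq⟩
    have hsatY : sat (V ∪ A) (P ∪ R) := by
      apply (sat_projAway hVA).2
      rw [projAway_union]
      exact sat_reduct_self.1 hVAS.1
    refine ⟨sat_reduct_self.2 hsatY, ?_⟩
    have hsub : ∀ Y', Y' ⊂ V ∪ A → A ⊆ Y' → sat Y' (reduct (P ∪ R) (V ∪ A)) → False := by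
      intro Y' hss hAY' hsatY'
      have hY'eq : (Y' \ A) ∪ A = Y' := Finset.sdiff_union_of_subset hAY'
      have h1 : sat (Y' \ A) (reduct (projAway (P ∪ R) A) V) := by
        apply (sat_reduct_projAway).1
        rwa [hY'eq]
      rw [projAway_union] at h1
      apply hVAS.2 (Y' \ A) ?_ h1
      constructor
      · intro x hx
        rcases Finset.mem_sdiff.1 hx with ⟨h2, h3⟩
        rcases Finset.mem_union.1 (hss.subset h2) with h4 | h4
        · exact h4
        · exact absurd h4 h3
      · intro hc
        apply hss.ne
        apply Finset.Subset.antisymm hss.subset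
        exact Finset.union_subset (hc.trans Finset.sdiff_subset) hAY'
    intro J hJss hsatJ
    rcases sat_reduct_union.1 hsatJ with ⟨hJP, hJR⟩
    by_cases hAJ : A ⊆ J
    · exact hsub J hJss hAJ hsatJ
    · have hAYB : A ⊆ (V ∪ A) ∩ B := fun a ha =>
        Finset.mem_inter.2 ⟨Finset.mem_union_right _ ha, hAB ha⟩
      have hii : ∀ Y' ⊂ V ∪ A, Y' ∩ B = (V ∪ A) ∩ B → ¬ sat Y' (reduct P (V ∪ A)) := by
        intro Y' hss heq hsatY'
        have hAY' : A ⊆ Y' := fun a ha => by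
          have h1 : a ∈ Y' ∩ B := by rw [heq]; exact hAYB ha
          exact (Finset.mem_inter.1 h1).1
        have hsatY'R : sat Y' (reduct R (V ∪ A)) := by
          rw [sat_reduct_inter hover, heq, ← sat_reduct_inter hover]
          exact (sat_reduct_union.1 (sat_reduct_self.2 hsatY)).2
        exact hsub Y' hss hAY' (sat_reduct_union.2 ⟨hsatY', hsatY'R⟩)
      have hsatYP : sat (V ∪ A) P := (sat_union.1 hsatY).1
      have hXss : J ∩ B ⊂ (V ∪ A) ∩ B := by
        constructor
        · exact Finset.inter_subset_inter hJss.subset le_rfl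
        · intro hc
          exact hAJ (fun a ha => (Finset.mem_inter.1 (hc (hAYB ha))).1)
      have hSEB : (J ∩ B, V ∪ A) ∈ SEB B P :=
        ⟨Or.inr hXss, hsatYP, hii, fun _ => ⟨J, hJss.subset, rfl, hJP⟩⟩
      have hs3' := hs3 (J ∩ B) (V ∪ A) hSEB
      have hYAB : (V ∪ A) ∩ A ∩ B = A := by
        ext x
        simp only [Finset.mem_inter, Finset.mem_union]
        exact ⟨fun h => h.1.2, fun h => ⟨⟨Or.inr h, h⟩, hAB h⟩⟩
      simp only [hYAB] at hs3'
      rcases hs3' with ⟨hfirst, -, -, hiii⟩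
      simp only at hfirst hiii
      rcases hfirst with heqY | hssB
      · have hJSE : (J, V ∪ A) ∈ SE P := ⟨hJss.subset, hsatYP, hJP⟩
        have hYYSEB : (V ∪ A, V ∪ A) ∈ SEB B P := SEB_total_iff.2 ⟨hsatYP, hii⟩
        have hdiff : J \ A = (V ∪ A) \ A := by
          apply Finset.Subset.antisymm
          · intro x hx
            rcases Finset.mem_sdiff.1 hx with ⟨h1, h2⟩
            exact Finset.mem_sdiff.2 ⟨hJss.subset h1, h2⟩
          · intro x hx
            rcases Finset.mem_sdiff.1 hx with ⟨h1, h2⟩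
            have h1' : x ∈ J ∩ B ∪ A := by rw [heqY]; exact h1
            rcases Finset.mem_union.1 h1' with h3 | h3
            · exact Finset.mem_sdiff.2 ⟨(Finset.mem_inter.1 h3).1, h2⟩
            · exact absurd h3 h2
        exact hJss.ne (hs2 J (V ∪ A) hJSE hYYSEB hdiff)
      · rcases hiii (lt_of_lt_of_le hssB Finset.inter_subset_left) with ⟨X', hX'sub, hX'B, hX'P⟩
        have hAX' : A ⊆ X' := fun a ha => by
          have h1 : a ∈ X' ∩ B := by rw [hX'B]; exact Finset.mem_union_right _ ha
          exact (Finset.mem_inter.1 h1).1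
        have hX'ss : X' ⊂ V ∪ A :=
          ⟨hX'sub, fun hc => hssB.ne (by rw [← hX'B, Finset.Subset.antisymm hX'sub hc])⟩
        have hYsatR : sat (V ∪ A) R := (sat_union.1 hsatY).2
        have hJBR : sat (J ∩ B) (reduct R (V ∪ A)) := by
          rw [← sat_reduct_inter hover]
          exact hJR
        have hJBA : sat ((J ∩ B) ∪ A) (reduct R (V ∪ A)) :=
          sat_reduct_add_A hsplit hR1 hR2 (fun a ha => Finset.mem_union_right _ ha) hYsatR hJBR
        have hX'R : sat X' (reduct R (V ∪ A)) := by
          rw [sat_reduct_inter hover, hX'B]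
          exact hJBA
        exact hsub X' hX'ss hAX' (sat_reduct_union.2 ⟨hX'P, hX'R⟩)

end Lemmas6

/-- for `A ⊆ B`, `P` satisfies `Δʳ` iff there exists an
`A`-simplification of `P` relative to `B`. -/
theorem stmt4 {Atom : Type} [DecidableEq Atom] [Fintype Atom]
    (P : ASPProgram Atom) (A B : Finset Atom) (hAB : A ⊆ B) :
    DeltaR P A B ↔ ∃ Q : ASPProgram Atom, progOver Q Aᶜ ∧ SimpEq P A B Q := by
  constructor
  · intro hΔ
    exact ⟨projAway P A, progOver_projAway, forward hAB hΔ⟩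
  · rintro ⟨Q, -, H⟩
    have s1 := cond_s1 hAB H
    exact ⟨s1, cond_s2 hAB H s1, cond_s3 hAB H s1⟩
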